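/- Let $F$ be a finite field with $|F| = 2$. Suppose $f : F \times F \to F$ satisfies: (a) for each fixed $x_1$, $f(x_1, \cdot)$ is injective, and (b) for each fixed $x_3$, $f(\cdot, x_3)$ is injective. Similarly suppose $g : F \times F \to F$ satisfies the analogous injectivity in both arguments. Then there is no function $D : F \times F \to F$ with $D(f(x_1,x_3), g(x_2,x_3)) = x_1 + x_2 + x_3$ for all $x_1, x_2, x_3 \in F$. -/

import Mathlib

/-!
A function of two arguments with values in a two-element type that is injective in each argument
takes the same value at `(a, b')` and `(a', b)` whenever `a ≠ a'` and `b ≠ b'`: both values differ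
from the one at `(a, b)`. So `f (0, 1) = f (1, 0)` and `g (0, 1) = g (1, 0)`, and a decoder `D`
would then have to return both `0 + 0 + 1 = 1` and `1 + 1 + 0 = 0` on the same input.
-/

theorem eq_of_ne_of_ne_of_natCard_eq_two {γ : Type*} (hγ : Nat.card γ = 2) {a b c : γ}
    (ha : a ≠ c) (hb : b ≠ c) : a = b :=
  ((Nat.card_eq_two_iff' c).1 hγ).unique ha hb

theorem apply_eq_apply_swap_of_injective_of_natCard_eq_two {α β γ : Type*} (hγ : Nat.card γ = 2)
    {φ : α × β → γ} (h₁ : ∀ a, Function.Injective fun b => φ (a, b))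
    (h₂ : ∀ b, Function.Injective fun a => φ (a, b)) {a a' : α} {b b' : β}
    (ha : a ≠ a') (hb : b ≠ b') : φ (a, b') = φ (a', b) :=
  eq_of_ne_of_ne_of_natCard_eq_two hγ (c := φ (a, b))
    (fun h => hb ((h₁ a).eq_iff.1 h).symm) (fun h => ha ((h₂ b).eq_iff.1 h).symm)

theorem stmt_10 (f g : ZMod 2 × ZMod 2 → ZMod 2)
    (hf1 : ∀ x₁ : ZMod 2, Function.Injective (fun x₃ => f (x₁, x₃)))
    (hf2 : ∀ x₃ : ZMod 2, Function.Injective (fun x₁ => f (x₁, x₃)))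
    (hg1 : ∀ x₂ : ZMod 2, Function.Injective (fun x₃ => g (x₂, x₃)))
    (hg2 : ∀ x₃ : ZMod 2, Function.Injective (fun x₂ => g (x₂, x₃))) :
    ¬ ∃ D : ZMod 2 × ZMod 2 → ZMod 2, ∀ x₁ x₂ x₃ : ZMod 2,
      D (f (x₁, x₃), g (x₂, x₃)) = x₁ + x₂ + x₃ := by
  rintro ⟨D, hD⟩
  have hcard : Nat.card (ZMod 2) = 2 := Nat.card_zmod 2
  have hf : f (0, 1) = f (1, 0) :=
    apply_eq_apply_swap_of_injective_of_natCard_eq_two hcard hf1 hf2 zero_ne_one zero_ne_one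
  have hg : g (0, 1) = g (1, 0) :=
    apply_eq_apply_swap_of_injective_of_natCard_eq_two hcard hg1 hg2 zero_ne_one zero_ne_one
  have h₁ := hD 0 0 1
  have h₀ := hD 1 1 0
  rw [hf, hg, h₀] at h₁
  exact absurd h₁ (by decide)
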